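/- arXiv:1409.7902 — 8 statements merged into one kernel-verified Lean document; each statement's English description precedes it below -/
import Mathlib

section
/- Let X be a Tychonoff topological space. Then X has a P-directed compact cover (i.e., a family {A_p : p ∈ ℕ^ℕ} of compact subsets of X with union X such that p ≤ q pointwise implies A_p ⊆ A_q) if and only if X is ℕ^ℕ-dominated, i.e., there is a family {A_K : K compact ⊆ ℕ^ℕ} of compact subsets of X with union X such that K ⊆ L implies A_K ⊆ A_L. -/
/-!
A compact `K ⊆ ℕ^ℕ` has finite coordinate projections, so it lies in the box `Iic (sup K)` with
`sup` taken coordinatewise, and each box `Iic p` is compact. Thus `K ↦ sup K` and `p ↦ Iic p` are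
monotone maps with cofinal image, from `K(ℕ^ℕ)` to `ℕ^ℕ` and back, and precomposing a monotone
compact cover with such a map gives again a monotone compact cover.
-/

open Set TopologicalSpace

namespace TopologicalSpace.Compacts

variable {ι α : Type*} [ConditionallyCompleteLinearOrderBot α] [TopologicalSpace α]

lemma bddAbove_eval_image [ClosedIciTopology α] (K : Compacts (ι → α)) (i : ι) :
    BddAbove (Function.eval i '' (K : Set (ι → α))) :=
  (K.isCompact.image (continuous_apply i)).bddAbove

def coordSup (K : Compacts (ι → α)) : ι → α :=
  fun i => sSup (Function.eval i '' (K : Set (ι → α)))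

lemma monotone_coordSup [ClosedIciTopology α] : Monotone (coordSup : Compacts (ι → α) → ι → α) :=
  fun _ L hKL i => csSup_le_csSup' (L.bddAbove_eval_image i) (image_mono hKL)

lemma coordSup_singleton (p : ι → α) : coordSup {p} = p := by
  funext i
  simp [coordSup]

lemma subset_Iic_coordSup [ClosedIciTopology α] (K : Compacts (ι → α)) :
    (K : Set (ι → α)) ⊆ Set.Iic K.coordSup :=
  fun _ hq i => le_csSup (K.bddAbove_eval_image i) (mem_image_of_mem _ hq)

def Iic [CompactIccSpace α] (p : ι → α) : Compacts (ι → α) :=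
  ⟨Set.Iic p, by simpa only [Icc_bot] using isCompact_Icc (a := ⊥) (b := p)⟩

lemma monotone_Iic [CompactIccSpace α] : Monotone (Iic : (ι → α) → Compacts (ι → α)) :=
  fun _ _ hpq => Set.Iic_subset_Iic.mpr hpq

end TopologicalSpace.Compacts

lemma iUnion_compacts_eq_biUnion {X Y : Type*} [TopologicalSpace Y] (B : Set Y → Set X) :
    ⋃ K : Compacts Y, B K = ⋃ K ∈ {K : Set Y | IsCompact K}, B K :=
  subset_antisymm (iUnion_subset fun K => subset_biUnion_of_mem (u := B) K.isCompact)
    (iUnion₂_subset fun K hK => subset_iUnion_of_subset ⟨K, hK⟩ subset_rfl)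

section Covers

variable {X : Type*} [TopologicalSpace X]

def IsMonotoneCompactCover {P : Type*} [Preorder P] (A : P → Set X) : Prop :=
  (∀ p, IsCompact (A p)) ∧ (⋃ p, A p) = univ ∧ Monotone A

lemma IsMonotoneCompactCover.comp {P Q : Type*} [Preorder P] [Preorder Q] {A : Q → Set X}
    (hA : IsMonotoneCompactCover A) {f : P → Q} (hf : Monotone f)
    (hcofinal : ∀ q, ∃ p, q ≤ f p) : IsMonotoneCompactCover (A ∘ f) := by
  obtain ⟨hcompact, hcover, hmono⟩ := hA
  refine ⟨fun p => hcompact (f p), eq_univ_of_forall fun x => ?_, hmono.comp hf⟩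
  obtain ⟨q, hxq⟩ := mem_iUnion.mp (hcover ▸ mem_univ x)
  obtain ⟨p, hqp⟩ := hcofinal q
  exact mem_iUnion.mpr ⟨p, hmono hqp hxq⟩

lemma exists_monotoneCompactCover_compacts_iff {Y : Type*} [TopologicalSpace Y] :
    (∃ C : Compacts Y → Set X, IsMonotoneCompactCover C) ↔
    ∃ B : Set Y → Set X,
      (∀ K, IsCompact K → IsCompact (B K)) ∧
      (⋃ K ∈ {K : Set Y | IsCompact K}, B K) = univ ∧
      ∀ K L : Set Y, IsCompact K → IsCompact L → K ⊆ L → B K ⊆ B L := by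
  classical
  constructor
  · rintro ⟨C, hcompact, hcover, hmono⟩
    set B : Set Y → Set X := fun K => if hK : IsCompact K then C ⟨K, hK⟩ else ∅
    have hBC (K : Compacts Y) : B K = C K := dif_pos K.isCompact
    refine ⟨B, fun K hK => hBC ⟨K, hK⟩ ▸ hcompact _, ?_,
      fun K L hK hL hKL => (hBC ⟨K, hK⟩).trans_le <| (hBC ⟨L, hL⟩).symm ▸ hmono hKL⟩
    rw [← iUnion_compacts_eq_biUnion, ← hcover]
    exact iUnion_congr hBC
  · rintro ⟨B, hcompact, hcover, hmono⟩
    exact ⟨fun K => B K, fun K => hcompact K K.isCompact,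
      (iUnion_compacts_eq_biUnion B).trans hcover,
      fun K L hKL => hmono K L K.isCompact L.isCompact hKL⟩

lemma exists_monotoneCompactCover_pi_iff_compacts {ι α : Type*}
    [ConditionallyCompleteLinearOrderBot α] [TopologicalSpace α] [OrderTopology α] :
    (∃ A : (ι → α) → Set X, IsMonotoneCompactCover A) ↔
    ∃ C : Compacts (ι → α) → Set X, IsMonotoneCompactCover C :=
  ⟨fun ⟨A, hA⟩ => ⟨A ∘ Compacts.coordSup, hA.comp Compacts.monotone_coordSup
      fun p => ⟨{p}, (Compacts.coordSup_singleton p).ge⟩⟩,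
    fun ⟨C, hC⟩ => ⟨C ∘ Compacts.Iic, hC.comp Compacts.monotone_Iic
      fun K => ⟨K.coordSup, K.subset_Iic_coordSup⟩⟩⟩

end Covers

theorem pDirected_cover_iff_baire_dominated_general (X : Type*) [TopologicalSpace X] :
    (∃ A : (ℕ → ℕ) → Set X,
      (∀ p, IsCompact (A p)) ∧
      (⋃ p, A p) = Set.univ ∧
      (∀ p q : ℕ → ℕ, (∀ n, p n ≤ q n) → A p ⊆ A q)) ↔
    (∃ B : Set (ℕ → ℕ) → Set X,
      (∀ K, IsCompact K → IsCompact (B K)) ∧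
      (⋃ K ∈ {K : Set (ℕ → ℕ) | IsCompact K}, B K) = Set.univ ∧
      (∀ K L : Set (ℕ → ℕ), IsCompact K → IsCompact L → K ⊆ L → B K ⊆ B L)) :=
  exists_monotoneCompactCover_pi_iff_compacts.trans exists_monotoneCompactCover_compacts_iff

/-- A Tychonoff space `X` has a `ℙ`-directed compact cover iff it is `ℕ^ℕ`-dominated. -/
theorem pDirected_cover_iff_baire_dominated (X : Type*) [TopologicalSpace X]
    [CompletelyRegularSpace X] [T2Space X] :
    (∃ A : (ℕ → ℕ) → Set X,
      (∀ p, IsCompact (A p)) ∧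
      (⋃ p, A p) = Set.univ ∧
      (∀ p q : ℕ → ℕ, (∀ n, p n ≤ q n) → A p ⊆ A q)) ↔
    (∃ B : Set (ℕ → ℕ) → Set X,
      (∀ K, IsCompact K → IsCompact (B K)) ∧
      (⋃ K ∈ {K : Set (ℕ → ℕ) | IsCompact K}, B K) = Set.univ ∧
      (∀ K L : Set (ℕ → ℕ), IsCompact K → IsCompact L → K ⊆ L → B K ⊆ B L)) :=
  pDirected_cover_iff_baire_dominated_general X
end

section
/- If X is a Tychonoff space that is K-Lusin (i.e., there is an upper semicontinuous map f : ℕ^ℕ → K(X) with pairwise disjoint values whose union is X), then X is strictly ℕ^ℕ-dominated: there is a family {A_K : K ∈ K(ℕ^ℕ)} of compact subsets of X with union X satisfying A_{K ∩ L} = A_K ∩ A_L for all compact K, L ⊆ ℕ^ℕ. -/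
/-- A Tychonoff `K`-Lusin space is strictly `ℕ^ℕ`-dominated. -/
theorem kLusin_strictly_dominated (X : Type*) [TopologicalSpace X]
    [CompletelyRegularSpace X] [T2Space X]
    (f : (ℕ → ℕ) → Set X)
    (hcomp : ∀ p, IsCompact (f p))
    (husc : ∀ p : ℕ → ℕ, ∀ V : Set X, IsOpen V → f p ⊆ V →
      ∃ U : Set (ℕ → ℕ), IsOpen U ∧ p ∈ U ∧ ∀ q ∈ U, f q ⊆ V)
    (hcover : (⋃ p, f p) = Set.univ)
    (hdisj : ∀ p q : ℕ → ℕ, p ≠ q → f p ∩ f q = ∅) :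
    ∃ A : Set (ℕ → ℕ) → Set X,
      (∀ K, IsCompact K → IsCompact (A K)) ∧
      (⋃ K ∈ {K : Set (ℕ → ℕ) | IsCompact K}, A K) = Set.univ ∧
      (∀ K L : Set (ℕ → ℕ), IsCompact K → IsCompact L → A (K ∩ L) = A K ∩ A L) := by
  classical
  refine ⟨fun K => ⋃ p ∈ K, f p, ?_, ?_, ?_⟩
  · -- compactness of A K for K compact
    intro K hK
    apply isCompact_of_finite_subcover
    intro ι U hU hsub
    -- for each p ∈ K, pick finite subcover of f p and open nbhd via usc
    have key : ∀ p : K, ∃ t : Finset ι, ∃ W : Set (ℕ → ℕ),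
        IsOpen W ∧ (p : ℕ → ℕ) ∈ W ∧ ∀ q ∈ W, f q ⊆ ⋃ i ∈ t, U i := by
      rintro ⟨p, hp⟩
      have hsubp : f p ⊆ ⋃ i, U i := by
        refine subset_trans ?_ hsub
        exact Set.subset_biUnion_of_mem hp
      obtain ⟨t, ht⟩ := (hcomp p).elim_finite_subcover U hU hsubp
      obtain ⟨W, hWo, hpW, hW⟩ := husc p (⋃ i ∈ t, U i)
        (isOpen_biUnion fun i _ => hU i) ht
      exact ⟨t, W, hWo, hpW, hW⟩
    choose t W hWo hpW hW using key
    have hKsub : K ⊆ ⋃ p : K, W p := fun x hx =>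
      Set.mem_iUnion.2 ⟨⟨x, hx⟩, hpW ⟨x, hx⟩⟩
    obtain ⟨s, hs⟩ := hK.elim_finite_subcover W hWo hKsub
    refine ⟨s.biUnion t, ?_⟩
    intro x hx
    obtain ⟨p, hpK, hxp⟩ := Set.mem_iUnion₂.1 hx
    obtain ⟨q, hqs, hpq⟩ := Set.mem_iUnion₂.1 (hs hpK)
    have : f p ⊆ ⋃ i ∈ t q, U i := hW q p hpq
    obtain ⟨i, hit, hxi⟩ := Set.mem_iUnion₂.1 (this hxp)
    exact Set.mem_iUnion₂.2 ⟨i, Finset.mem_biUnion.2 ⟨q, hqs, hit⟩, hxi⟩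
  · -- cover
    apply Set.eq_univ_of_forall
    intro x
    have hx : x ∈ ⋃ p, f p := hcover ▸ Set.mem_univ x
    obtain ⟨p, hp⟩ := Set.mem_iUnion.1 hx
    refine Set.mem_iUnion₂.2 ⟨{p}, isCompact_singleton, ?_⟩
    exact Set.mem_iUnion₂.2 ⟨p, rfl, hp⟩
  · -- intersection
    intro K L _ _
    ext x
    simp only [Set.mem_iUnion, Set.mem_inter_iff]
    constructor
    · rintro ⟨p, ⟨hpK, hpL⟩, hxp⟩
      exact ⟨⟨p, hpK, hxp⟩, ⟨p, hpL, hxp⟩⟩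
    · rintro ⟨⟨p, hpK, hxp⟩, ⟨q, hqL, hxq⟩⟩
      rcases eq_or_ne p q with rfl | hne
      · exact ⟨p, ⟨hpK, hqL⟩, hxp⟩
      · exact absurd (hdisj p q hne ▸ Set.mem_inter hxp hxq) (Set.notMem_empty x)
end

section
/- Let (M, d) be a metric space, X a metric space, and {F_K : K ∈ K(M)} a family of compact subsets of X with F_K ⊆ F_L whenever K ⊆ L. For nonempty compact K ⊆ M define A_K = ⋂_{n≥1} ⋃ {F_L : L compact, K ⊆ L ⊆ U_n(K)}, where U_n(K) = {t ∈ M : d(t, K) < 1/n}, and A_∅ = F_∅. Then each A_K is a compact subset of X. -/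
/-!
Let `K` be nonempty and `x m ∈ A K`, say `x m ∈ F (L m)` with `K ⊆ L m ⊆ U_{m+1}(K)`. Since the
`L m` shrink to the compact set `K`, every tail `S n = K ∪ ⋃_{m ≥ n} L m` is compact, and
`S n ⊆ U_n(K)`. A subsequence of `x` converges in the compact set `F (S 0)`; its limit lies in
every closed set `F (S n)`, which is one of the sets whose union is taken at stage `n`, hence
the limit lies in `A K`.
-/

open Filter Set Topology Metric

theorem IsCompact.union_iUnion_of_tendsto_smallSets {X ι : Type*} [TopologicalSpace X]
    {K : Set X} {L : ι → Set X} (hK : IsCompact K) (hL : ∀ i, IsCompact (L i))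
    (hLK : Tendsto L cofinite (𝓝ˢ K).smallSets) : IsCompact (K ∪ ⋃ i, L i) := by
  refine isCompact_of_finite_subcover fun U hU hcover => ?_
  obtain ⟨t₀, ht₀⟩ := hK.elim_finite_subcover U hU (subset_union_left.trans hcover)
  set V := ⋃ i ∈ t₀, U i
  set s := {i | ¬L i ⊆ V}
  have hs : s.Finite := eventually_cofinite.1 <|
    tendsto_smallSets_iff.1 hLK V ((isOpen_biUnion fun i _ => hU i).mem_nhdsSet.2 ht₀)
  have hsplit : K ∪ ⋃ i, L i ⊆ (K ∪ ⋃ i ∈ s, L i) ∪ V := by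
    refine union_subset (subset_union_left.trans subset_union_left) (iUnion_subset fun i => ?_)
    by_cases hi : i ∈ s
    · exact (subset_biUnion_of_mem hi).trans (subset_union_right.trans subset_union_left)
    · exact (not_not.1 hi).trans subset_union_right
  have hsub : K ∪ ⋃ i ∈ s, L i ⊆ K ∪ ⋃ i, L i :=
    union_subset_union_right K (iUnion₂_subset fun i _ => subset_iUnion L i)
  obtain ⟨t₁, ht₁⟩ := (hK.union (hs.isCompact_biUnion fun i _ => hL i)).elim_finite_subcover
    U hU (hsub.trans hcover)
  classical
  exact ⟨t₁ ∪ t₀, by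
    rw [Finset.set_biUnion_union]; exact hsplit.trans (union_subset_union_left V ht₁)⟩

theorem Metric.tendsto_smallSets_nhdsSet_of_infDist_lt {M ι : Type*} [PseudoMetricSpace M]
    {K : Set M} (hK : IsCompact K) (hne : K.Nonempty) {L : ι → Set M} {l : Filter ι} {ε : ι → ℝ}
    (hε : Tendsto ε l (𝓝 0)) (hLε : ∀ i, ∀ t ∈ L i, infDist t K < ε i) :
    Tendsto L l (𝓝ˢ K).smallSets := by
  refine (hasBasis_nhdsSet_thickening hK).smallSets.tendsto_right_iff.2 fun δ hδ => ?_
  filter_upwards [hε.eventually (gt_mem_nhds hδ)] with i hi t ht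
  exact (mem_thickening_iff_infDist_lt hne).2 ((hLε i t ht).trans hi)

theorem Set.subset_union_iUnion_add {α : Type*} {K : Set α} {L : ℕ → Set α} {n m : ℕ}
    (hnm : n ≤ m) : L m ⊆ K ∪ ⋃ j, L (j + n) :=
  Nat.sub_add_cancel hnm ▸ (subset_iUnion (fun j => L (j + n)) (m - n)).trans subset_union_right

section Tails

variable {M : Type*} [PseudoMetricSpace M] {K : Set M} {L : ℕ → Set M}

theorem isCompact_union_iUnion_add (hK : IsCompact K) (hne : K.Nonempty)
    (hL : ∀ m, IsCompact (L m)) (hLK : ∀ m, ∀ t ∈ L m, infDist t K < 1 / ((m : ℝ) + 1))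
    (n : ℕ) : IsCompact (K ∪ ⋃ j, L (j + n)) :=
  hK.union_iUnion_of_tendsto_smallSets (fun _ => hL _) <| Nat.cofinite_eq_atTop ▸
    (tendsto_smallSets_nhdsSet_of_infDist_lt hK hne tendsto_one_div_add_atTop_nhds_zero_nat
      hLK).comp (tendsto_add_atTop_nat n)

theorem infDist_lt_of_mem_union_iUnion_add
    (hLK : ∀ m, ∀ t ∈ L m, infDist t K < 1 / ((m : ℝ) + 1)) {n : ℕ} (hn : 1 ≤ n) :
    ∀ t ∈ K ∪ ⋃ j, L (j + n), infDist t K < 1 / (n : ℝ) := by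
  have hn' : (0 : ℝ) < n := Nat.cast_pos.2 hn
  rintro t (ht | ⟨_, ⟨j, rfl⟩, ht⟩)
  · rw [infDist_zero_of_mem ht]
    positivity
  · refine (hLK _ t ht).trans_le (one_div_le_one_div_of_le hn' ?_)
    push_cast
    linarith [(j.cast_nonneg : (0 : ℝ) ≤ j)]

end Tails

/-- The regularization `A_K = ⋂_{n≥1} ⋃ {F_L : K ⊆ L ⊆ U_n(K), L compact}` of a monotone
family of compact sets has compact values. -/
theorem regularization_isCompact (M X : Type*) [MetricSpace M] [MetricSpace X]
    (F : Set M → Set X)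
    (hFcomp : ∀ K : Set M, IsCompact K → IsCompact (F K))
    (hFmono : ∀ K L : Set M, IsCompact K → IsCompact L → K ⊆ L → F K ⊆ F L)
    (A : Set M → Set X)
    (hA0 : A ∅ = F ∅)
    (hA : ∀ K : Set M, K.Nonempty → A K =
      ⋂ n ∈ {n : ℕ | 1 ≤ n}, ⋃ L ∈ {L : Set M | IsCompact L ∧ K ⊆ L ∧
        ∀ t ∈ L, Metric.infDist t K < 1 / (n : ℝ)}, F L) :
    ∀ K : Set M, IsCompact K → IsCompact (A K) := by
  intro K hK
  rcases K.eq_empty_or_nonempty with rfl | hne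
  · exact hA0 ▸ hFcomp ∅ isCompact_empty
  refine IsSeqCompact.isCompact fun x hx => ?_
  have hwitness (m : ℕ) : ∃ L : Set M, (IsCompact L ∧ K ⊆ L ∧ ∀ t ∈ L, infDist t K < 1 / ((m : ℝ) + 1))
      ∧ x m ∈ F L := by
    have h := hx m
    rw [hA K hne, mem_iInter₂] at h
    simpa only [mem_iUnion₂, exists_prop, mem_ofPred_eq, Nat.cast_succ] using h (m + 1) m.succ_pos
  choose L hL hxL using hwitness
  set S : ℕ → Set M := fun n => K ∪ ⋃ j, L (j + n)
  have hS := isCompact_union_iUnion_add hK hne (fun m => (hL m).1) fun m => (hL m).2.2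
  have hxS n m (hnm : n ≤ m) : x m ∈ F (S n) :=
    hFmono _ _ (hL m).1 (hS n) (subset_union_iUnion_add hnm) (hxL m)
  obtain ⟨p, -, σ, hσ, hp⟩ := (hFcomp _ (hS 0)).isSeqCompact fun m => hxS 0 m m.zero_le
  refine ⟨p, ?_, σ, hσ, hp⟩
  simp only [hA K hne, mem_iInter₂, mem_iUnion₂, exists_prop]
  intro n (hn : 1 ≤ n)
  refine ⟨S n, ⟨hS n, subset_union_left,
    infDist_lt_of_mem_union_iUnion_add (fun m => (hL m).2.2) hn⟩, ?_⟩
  exact (hFcomp _ (hS n)).isClosed.mem_of_tendsto hp <|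
    (eventually_ge_atTop n).mono fun k hk => hxS n (σ k) (hk.trans hσ.le_apply)
end

section
/- Let M be a metric space and {F_K : K ∈ K(M)} a strictly M-dominating family for a metric space X (each F_K compact, ⋃ F_K = X, and F_{K∩L} = F_K ∩ F_L for all compact K, L). Define A_K = ⋂_{n≥1} ⋃ {F_L : K ⊆ L ⊆ U_n(K), L compact} for K ≠ ∅ and A_∅ = F_∅, where U_n(K) is the open 1/n-neighborhood of K. Then A_{K ∩ L} = A_K ∩ A_L for all compact K, L ⊆ M. -/
open Metric Set in
/-- Key uniform lemma: for compact nonempty `K`, `L`, points δ-close to both `K` and `L`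
are ε-close to `K ∩ L` (in the strong sense that a witness in `K ∩ L` exists, so if
`K ∩ L = ∅` this says the δ-neighborhoods are disjoint). -/
theorem regularization_key {M : Type*} [MetricSpace M] {K L : Set M}
    (hK : IsCompact K) (hL : IsCompact L) (hKne : K.Nonempty) (hLne : L.Nonempty)
    {ε : ℝ} (hε : 0 < ε) :
    ∃ δ > 0, ∀ t : M, infDist t K < δ → infDist t L < δ →
      ∃ s ∈ K ∩ L, dist t s < ε := by
  set O : Set M := ⋃ s ∈ K ∩ L, ball s (ε / 2) with hO
  have hOopen : IsOpen O := isOpen_biUnion fun _ _ => isOpen_ball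
  set C : Set M := K \ O with hC
  have hCcomp : IsCompact C := hK.diff hOopen
  have hmemO : ∀ k : M, k ∈ O → ∃ s ∈ K ∩ L, dist k s < ε / 2 := by
    intro k hk
    obtain ⟨s, hs, hball⟩ := Set.mem_iUnion₂.1 hk
    exact ⟨s, hs, mem_ball.1 hball⟩
  rcases C.eq_empty_or_nonempty with hCe | hCne
  · refine ⟨ε / 2, by positivity, fun t htK _ => ?_⟩
    obtain ⟨k, hkK, hk⟩ := (infDist_lt_iff hKne).1 htK
    have hkO : k ∈ O := by
      by_contra h
      have hc : k ∈ C := ⟨hkK, h⟩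
      rw [hCe] at hc
      exact hc.elim
    obtain ⟨s, hs, hds⟩ := hmemO k hkO
    exact ⟨s, hs, by have := dist_triangle t k s; linarith⟩
  · obtain ⟨k0, hk0C, hmin⟩ := hCcomp.exists_isMinOn hCne
      ((continuous_infDist_pt L).continuousOn)
    have hk0L : k0 ∉ L := by
      intro h
      exact hk0C.2 (mem_biUnion ⟨hk0C.1, h⟩ (mem_ball_self (by positivity)))
    have hρ : 0 < infDist k0 L := (hL.isClosed.notMem_iff_infDist_pos hLne).1 hk0L
    refine ⟨min (infDist k0 L / 2) (ε / 2), by positivity, fun t htK htL => ?_⟩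
    obtain ⟨k, hkK, hk⟩ := (infDist_lt_iff hKne).1 htK
    have h1 : min (infDist k0 L / 2) (ε / 2) ≤ infDist k0 L / 2 := min_le_left _ _
    have h2 : min (infDist k0 L / 2) (ε / 2) ≤ ε / 2 := min_le_right _ _
    have hkO : k ∈ O := by
      by_contra h
      have hkC : k ∈ C := ⟨hkK, h⟩
      have hmk : infDist k0 L ≤ infDist k L := hmin hkC
      have htri : infDist k L ≤ infDist t L + dist k t := infDist_le_infDist_add_dist
      have hdk : dist k t = dist t k := dist_comm k t
      linarith
    obtain ⟨s, hs, hds⟩ := hmemO k hkO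
    exact ⟨s, hs, by have := dist_triangle t k s; linarith⟩

/-- The regularization of a strictly `M`-dominating family again satisfies
`A_{K ∩ L} = A_K ∩ A_L`. -/
theorem regularization_inter_eq (M X : Type*) [MetricSpace M] [MetricSpace X]
    (F : Set M → Set X)
    (hFcomp : ∀ K : Set M, IsCompact K → IsCompact (F K))
    (hFcover : (⋃ K ∈ {K : Set M | IsCompact K}, F K) = Set.univ)
    (hFinter : ∀ K L : Set M, IsCompact K → IsCompact L → F (K ∩ L) = F K ∩ F L)
    (A : Set M → Set X)
    (hA0 : A ∅ = F ∅)
    (hA : ∀ K : Set M, K.Nonempty → A K =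
      ⋂ n ∈ {n : ℕ | 1 ≤ n}, ⋃ L ∈ {L : Set M | IsCompact L ∧ K ⊆ L ∧
        ∀ t ∈ L, Metric.infDist t K < 1 / (n : ℝ)}, F L) :
    ∀ K L : Set M, IsCompact K → IsCompact L → A (K ∩ L) = A K ∩ A L := by
  -- monotonicity of F
  have Fmono : ∀ P Q : Set M, IsCompact P → IsCompact Q → P ⊆ Q → F P ⊆ F Q := by
    intro P Q hP hQ hPQ
    have h := hFinter P Q hP hQ
    rw [Set.inter_eq_self_of_subset_left hPQ] at h
    rw [h]
    exact Set.inter_subset_right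
  -- membership characterization of A
  have memA : ∀ P : Set M, P.Nonempty → ∀ x : X, x ∈ A P ↔ ∀ n : ℕ, 1 ≤ n →
      ∃ Q : Set M, (IsCompact Q ∧ P ⊆ Q ∧ ∀ t ∈ Q, Metric.infDist t P < 1 / (n : ℝ)) ∧
        x ∈ F Q := by
    intro P hP x
    rw [hA P hP]
    simp [Set.mem_iInter, Set.mem_iUnion]
  -- F P ⊆ A P for compact nonempty P
  have FsubA : ∀ P : Set M, IsCompact P → P.Nonempty → F P ⊆ A P := by
    intro P hP hPne x hx
    rw [memA P hPne]
    intro n hn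
    have hn' : (0 : ℝ) < n := by exact_mod_cast hn
    exact ⟨P, ⟨hP, subset_rfl, fun t ht => by
      rw [Metric.infDist_zero_of_mem ht]; positivity⟩, hx⟩
  intro K L hK hL
  rcases K.eq_empty_or_nonempty with hKe | hKne
  · rw [hKe, Set.empty_inter, hA0]
    rcases L.eq_empty_or_nonempty with hLe | hLne
    · rw [hLe, hA0, Set.inter_self]
    · have h : F ∅ ⊆ A L :=
        (Fmono ∅ L isCompact_empty hL (Set.empty_subset L)).trans (FsubA L hL hLne)
      exact (Set.inter_eq_left.mpr h).symm
  rcases L.eq_empty_or_nonempty with hLe | hLne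
  · rw [hLe, Set.inter_empty, hA0]
    have h : F ∅ ⊆ A K :=
      (Fmono ∅ K isCompact_empty hK (Set.empty_subset K)).trans (FsubA K hK hKne)
    exact (Set.inter_eq_right.mpr h).symm
  by_cases hKL : (K ∩ L).Nonempty
  · -- main case: K ∩ L nonempty
    ext x
    constructor
    · intro hx
      have hx' := (memA _ hKL x).1 hx
      have half : ∀ (P : Set M), IsCompact P → P.Nonempty → K ∩ L ⊆ P → x ∈ A P := by
        intro P hP hPne hsub
        rw [memA P hPne]
        intro n hn
        have hn' : (0 : ℝ) < n := by exact_mod_cast hn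
        obtain ⟨Q, ⟨hQc, hQsub, hQnear⟩, hxQ⟩ := hx' n hn
        refine ⟨Q ∪ P, ⟨hQc.union hP, Set.subset_union_right, ?_⟩,
          Fmono Q (Q ∪ P) hQc (hQc.union hP) Set.subset_union_left hxQ⟩
        intro t ht
        rcases ht with ht | ht
        · exact lt_of_le_of_lt (Metric.infDist_le_infDist_of_subset hsub hKL) (hQnear t ht)
        · rw [Metric.infDist_zero_of_mem ht]; positivity
      exact ⟨half K hK hKne Set.inter_subset_left, half L hL hLne Set.inter_subset_right⟩
    · rintro ⟨hxK, hxL⟩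
      rw [memA _ hKL]
      intro m hm
      have hm' : (0 : ℝ) < 1 / (m : ℝ) := by
        have : (0 : ℝ) < m := by exact_mod_cast hm
        positivity
      obtain ⟨δ, hδ, hkey⟩ := regularization_key hK hL hKne hLne hm'
      obtain ⟨n, hn⟩ := exists_nat_one_div_lt hδ
      have hn1 : (1 : ℕ) ≤ n + 1 := Nat.le_add_left 1 n
      obtain ⟨P, ⟨hPc, hPsub, hPnear⟩, hxP⟩ := (memA K hKne x).1 hxK (n + 1) hn1
      obtain ⟨Q, ⟨hQc, hQsub, hQnear⟩, hxQ⟩ := (memA L hLne x).1 hxL (n + 1) hn1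
      have hcast : (1 : ℝ) / ((n + 1 : ℕ) : ℝ) < δ := by push_cast; exact hn
      refine ⟨P ∩ Q, ⟨hPc.inter_right hQc.isClosed,
        Set.inter_subset_inter hPsub hQsub, ?_⟩, ?_⟩
      · rintro t ⟨htP, htQ⟩
        have h1 : Metric.infDist t K < δ := lt_trans (hPnear t htP) hcast
        have h2 : Metric.infDist t L < δ := lt_trans (hQnear t htQ) hcast
        obtain ⟨s, hs, hds⟩ := hkey t h1 h2
        exact lt_of_le_of_lt (Metric.infDist_le_dist_of_mem hs) hds
      · rw [hFinter P Q hPc hQc]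
        exact ⟨hxP, hxQ⟩
  · -- K ∩ L = ∅, K, L nonempty
    have heq : K ∩ L = ∅ := Set.not_nonempty_iff_eq_empty.1 hKL
    rw [heq, hA0]
    ext x
    constructor
    · intro hx
      exact ⟨(Fmono ∅ K isCompact_empty hK (Set.empty_subset K)).trans (FsubA K hK hKne) hx,
        (Fmono ∅ L isCompact_empty hL (Set.empty_subset L)).trans (FsubA L hL hLne) hx⟩
    · rintro ⟨hxK, hxL⟩
      obtain ⟨δ, hδ, hkey⟩ := regularization_key hK hL hKne hLne one_pos
      obtain ⟨n, hn⟩ := exists_nat_one_div_lt hδ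
      have hn1 : (1 : ℕ) ≤ n + 1 := Nat.le_add_left 1 n
      obtain ⟨P, ⟨hPc, hPsub, hPnear⟩, hxP⟩ := (memA K hKne x).1 hxK (n + 1) hn1
      obtain ⟨Q, ⟨hQc, hQsub, hQnear⟩, hxQ⟩ := (memA L hLne x).1 hxL (n + 1) hn1
      have hcast : (1 : ℝ) / ((n + 1 : ℕ) : ℝ) < δ := by push_cast; exact hn
      have hPQ : P ∩ Q = ∅ := by
        rw [Set.eq_empty_iff_forall_notMem]
        rintro t ⟨htP, htQ⟩
        obtain ⟨s, hs, -⟩ := hkey t (lt_trans (hPnear t htP) hcast)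
          (lt_trans (hQnear t htQ) hcast)
        rw [heq] at hs
        exact hs
      have h := hFinter P Q hPc hQc
      rw [hPQ] at h
      rw [h]
      exact ⟨hxP, hxQ⟩
end

section
/- With the hypotheses and definition of A_K as in the regularization of a strictly dominating family (A_K = ⋂_{n≥1} ⋃ {F_L : K ⊆ L ⊆ U_n(K)}), the family {A_K} satisfies the countable intersection property: for any sequence K_1, K_2, … of compact subsets of M, ⋂_{n=1}^∞ A_{K_n} = A_{⋂_{n=1}^∞ K_n}. -/
/-- The regularization of a strictly dominating family satisfies the countable intersection
property `⋂_n A_{K_n} = A_{⋂_n K_n}`. -/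
theorem regularization_countable_inter (M X : Type*) [MetricSpace M] [MetricSpace X]
    (F : Set M → Set X)
    (hFcomp : ∀ K : Set M, IsCompact K → IsCompact (F K))
    (hFcover : (⋃ K ∈ {K : Set M | IsCompact K}, F K) = Set.univ)
    (hFinter : ∀ K L : Set M, IsCompact K → IsCompact L → F (K ∩ L) = F K ∩ F L)
    (A : Set M → Set X)
    (hA0 : A ∅ = F ∅)
    (hA : ∀ K : Set M, K.Nonempty → A K =
      ⋂ n ∈ {n : ℕ | 1 ≤ n}, ⋃ L ∈ {L : Set M | IsCompact L ∧ K ⊆ L ∧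
        ∀ t ∈ L, Metric.infDist t K < 1 / (n : ℝ)}, F L) :
    ∀ Kseq : ℕ → Set M, (∀ n, IsCompact (Kseq n)) →
      (⋂ n, A (Kseq n)) = A (⋂ n, Kseq n) := by
  intro Kseq hKcomp
  -- monotonicity of F on compact sets
  have hFmono : ∀ K L : Set M, IsCompact K → IsCompact L → K ⊆ L → F K ⊆ F L := by
    intro K L hK hL hKL
    have h := hFinter K L hK hL
    rw [Set.inter_eq_self_of_subset_left hKL] at h
    rw [h]; exact Set.inter_subset_right
  have hIcomp : IsCompact (⋂ n, Kseq n) :=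
    IsCompact.of_isClosed_subset (hKcomp 0)
      (isClosed_iInter fun n => (hKcomp n).isClosed) (Set.iInter_subset _ 0)
  have hFe : ∀ L : Set M, IsCompact L → F ∅ ⊆ F L := fun L hL =>
    hFmono ∅ L isCompact_empty hL (Set.empty_subset L)
  -- membership characterization
  have hmem : ∀ (Kk : Set M), Kk.Nonempty → ∀ x : X, (x ∈ A Kk ↔
      ∀ n : ℕ, 1 ≤ n → ∃ L, IsCompact L ∧ Kk ⊆ L ∧
        (∀ t ∈ L, Metric.infDist t Kk < 1 / (n : ℝ)) ∧ x ∈ F L) := by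
    intro Kk hKk x
    rw [hA Kk hKk]
    simp only [Set.mem_iInter, Set.mem_iUnion, Set.mem_setOf_eq, exists_prop]
    constructor
    · intro h n hn; obtain ⟨L, ⟨h1, h2, h3⟩, h4⟩ := h n hn; exact ⟨L, h1, h2, h3, h4⟩
    · intro h n hn; obtain ⟨L, h1, h2, h3, h4⟩ := h n hn; exact ⟨L, ⟨h1, h2, h3⟩, h4⟩
  -- F ∅ is contained in every A K
  have hAe : ∀ Kk : Set M, IsCompact Kk → F ∅ ⊆ A Kk := by
    intro Kk hKk
    rcases Set.eq_empty_or_nonempty Kk with h | h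
    · subst h; rw [hA0]
    · intro x hx
      rw [hmem Kk h x]
      intro n hn
      refine ⟨Kk, hKk, subset_rfl, fun t ht => ?_, hFe Kk hKk hx⟩
      rw [Metric.infDist_zero_of_mem ht]
      have hn' : (0 : ℝ) < n := by exact_mod_cast hn
      positivity
  ext x
  simp only [Set.mem_iInter]
  constructor
  · -- hard direction
    intro hxn
    by_cases hex : ∃ j, Kseq j = ∅
    · obtain ⟨j, hj⟩ := hex
      have hI : (⋂ n, Kseq n) = ∅ := Set.subset_eq_empty (Set.iInter_subset _ j) hj
      rw [hI, hA0]
      have := hxn j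
      rwa [hj, hA0] at this
    · push_neg at hex
      have hne : ∀ n, (Kseq n).Nonempty := hex
      have hch : ∀ k n : ℕ, ∃ L, IsCompact L ∧ Kseq k ⊆ L ∧
          (∀ t ∈ L, Metric.infDist t (Kseq k) < 1 / ((n : ℝ) + 1)) ∧ x ∈ F L := by
        intro k n
        have h := (hmem (Kseq k) (hne k) x).mp (hxn k) (n + 1) (by omega)
        obtain ⟨L, h1, h2, h3, h4⟩ := h
        refine ⟨L, h1, h2, fun t ht => ?_, h4⟩
        have := h3 t ht
        push_cast at this
        exact this
      choose ℓ hc hs hcl hF using hch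
      -- recursive intersection along an enumeration of pairs
      let g : ℕ → Set M := fun i => ℓ (Nat.unpair i).1 (Nat.unpair i).2
      let C : ℕ → Set M := fun N => Nat.rec (g 0) (fun n Cn => Cn ∩ g (n + 1)) N
      have hC0 : C 0 = g 0 := rfl
      have hCsucc : ∀ N, C (N + 1) = C N ∩ g (N + 1) := fun N => rfl
      have hgc : ∀ i, IsCompact (g i) := fun i => hc _ _
      have hCc : ∀ N, IsCompact (C N) := by
        intro N; induction N with
        | zero => exact hgc 0
        | succ n ih => rw [hCsucc]; exact ih.inter (hgc (n + 1))
      have hCF : ∀ N, x ∈ F (C N) := by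
        intro N; induction N with
        | zero => exact hF _ _
        | succ n ih =>
          rw [hCsucc, hFinter _ _ (hCc n) (hgc (n + 1))]
          exact ⟨ih, hF _ _⟩
      have hCK : ∀ N, (⋂ n, Kseq n) ⊆ C N := by
        intro N; induction N with
        | zero => exact (Set.iInter_subset _ _).trans (hs _ _)
        | succ n ih =>
          rw [hCsucc]
          exact Set.subset_inter ih ((Set.iInter_subset _ _).trans (hs _ _))
      have hCanti : ∀ N, C (N + 1) ⊆ C N := by
        intro N; rw [hCsucc]; exact Set.inter_subset_left
      have hCmem : ∀ N i, i ≤ N → C N ⊆ g i := by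
        intro N; induction N with
        | zero => intro i hi; interval_cases i; exact subset_rfl
        | succ n ih =>
          intro i hi
          rcases Nat.lt_or_ge i (n + 1) with h | h
          · exact (hCanti n).trans (ih i (by omega))
          · have : i = n + 1 := by omega
            subst this
            rw [hCsucc]; exact Set.inter_subset_right
      -- limit points of all C N lie in the intersection
      have hlim : ∀ t : M, (∀ N, t ∈ C N) → t ∈ ⋂ n, Kseq n := by
        intro t ht
        rw [Set.mem_iInter]
        intro k
        have hkey : ∀ p : ℕ, Metric.infDist t (Kseq k) < 1 / ((p : ℝ) + 1) := by
          intro p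
          have h1 : t ∈ g (Nat.pair k p) := hCmem _ _ le_rfl (ht (Nat.pair k p))
          have h2 : g (Nat.pair k p) = ℓ k p := by
            simp only [g, Nat.unpair_pair]
          rw [h2] at h1
          exact hcl k p t h1
        have h0 : Metric.infDist t (Kseq k) ≤ 0 := by
          by_contra h
          push_neg at h
          obtain ⟨p, hp⟩ := exists_nat_one_div_lt h
          exact absurd (hkey p) (not_lt.mpr hp.le)
        have h0' : Metric.infDist t (Kseq k) = 0 := le_antisymm h0 Metric.infDist_nonneg
        exact ((hKcomp k).isClosed.mem_iff_infDist_zero (hne k)).mpr h0'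
      rcases Set.eq_empty_or_nonempty (⋂ n, Kseq n) with hI | hI
      · -- empty intersection: some C N is empty
        rw [hI, hA0]
        have hCe : ∃ N, C N = ∅ := by
          by_contra hN
          push_neg at hN
          have hCne : ∀ N, (C N).Nonempty := hN
          obtain ⟨t, ht⟩ := IsCompact.nonempty_iInter_of_sequence_nonempty_isCompact_isClosed
            C hCanti hCne (hCc 0) (fun N => (hCc N).isClosed)
          rw [Set.mem_iInter] at ht
          have := hlim t ht
          rw [hI] at this
          exact this
        obtain ⟨N, hN⟩ := hCe
        have := hCF N
        rwa [hN] at this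
      · -- nonempty intersection
        rw [hmem _ hI x]
        intro m hm
        have hm' : (0 : ℝ) < 1 / (m : ℝ) := by
          have : (0 : ℝ) < m := by exact_mod_cast hm
          positivity
        -- find N with C N within 1/m of the intersection
        by_contra hcon
        push_neg at hcon
        have hVne : ∀ N, (C N ∩ {t | 1 / (m : ℝ) ≤ Metric.infDist t (⋂ n, Kseq n)}).Nonempty := by
          intro N
          have h := hcon (C N) (hCc N) (hCK N)
          have h2 : ¬ ∀ t ∈ C N, Metric.infDist t (⋂ n, Kseq n) < 1 / (m : ℝ) :=
            fun hall => h hall (hCF N)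
          push_neg at h2
          obtain ⟨t, ht1, ht2⟩ := h2
          exact ⟨t, ht1, ht2⟩
        have hVclosed : ∀ N, IsClosed (C N ∩ {t | 1 / (m : ℝ) ≤ Metric.infDist t (⋂ n, Kseq n)}) :=
          fun N => (hCc N).isClosed.inter
            (isClosed_le continuous_const (Metric.continuous_infDist_pt _))
        obtain ⟨t, ht⟩ := IsCompact.nonempty_iInter_of_sequence_nonempty_isCompact_isClosed
          (fun N => C N ∩ {t | 1 / (m : ℝ) ≤ Metric.infDist t (⋂ n, Kseq n)})
          (fun N => Set.inter_subset_inter_left _ (hCanti N)) hVne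
          ((hCc 0).inter_right
            (isClosed_le continuous_const (Metric.continuous_infDist_pt _)))
          hVclosed
        · rw [Set.mem_iInter] at ht
          have htC : ∀ N, t ∈ C N := fun N => (ht N).1
          have htK := hlim t htC
          have hz : Metric.infDist t (⋂ n, Kseq n) = 0 := Metric.infDist_zero_of_mem htK
          have h3 : 1 / (m : ℝ) ≤ Metric.infDist t (⋂ n, Kseq n) := (ht 0).2
          rw [hz] at h3
          exact absurd (lt_of_lt_of_le hm' h3) (lt_irrefl 0)
  · -- easy direction: A (⋂ Kseq) ⊆ A (Kseq j)
    intro hx j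
    rcases Set.eq_empty_or_nonempty (Kseq j) with hj | hj
    · have hI : (⋂ n, Kseq n) = ∅ := Set.subset_eq_empty (Set.iInter_subset _ j) hj
      rw [hI] at hx
      rw [hj]
      exact hx
    · rcases Set.eq_empty_or_nonempty (⋂ n, Kseq n) with hI | hI
      · rw [hI, hA0] at hx
        exact hAe (Kseq j) (hKcomp j) hx
      · rw [hmem _ hI x] at hx
        rw [hmem _ hj x]
        intro n hn
        obtain ⟨L, hLc, hLs, hLcl, hLF⟩ := hx n hn
        refine ⟨L ∪ Kseq j, hLc.union (hKcomp j), Set.subset_union_right, fun t ht => ?_,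
          hFmono L (L ∪ Kseq j) hLc (hLc.union (hKcomp j)) Set.subset_union_left hLF⟩
        rcases ht with ht | ht
        · calc Metric.infDist t (Kseq j)
              ≤ Metric.infDist t (⋂ n, Kseq n) :=
                Metric.infDist_le_infDist_of_subset (Set.iInter_subset _ j) hI
            _ < 1 / (n : ℝ) := hLcl t ht
        · rw [Metric.infDist_zero_of_mem ht]
          have : (0 : ℝ) < n := by exact_mod_cast hn
          positivity
end

section
/- Let K_n → K and L_n → L in the Hausdorff metric on nonempty compact subsets of a metric space, with K ⊆ K_n and L ⊆ L_n for all n, and K ∩ L ≠ ∅. Then K_n ∩ L_n → K ∩ L in the Hausdorff metric. -/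
open Metric EMetric Filter

lemma inter_key {M : Type*} [MetricSpace M] {K L : Set M}
    (hK : IsCompact K) (hLcl : IsClosed L) (hKL : (K ∩ L).Nonempty) :
    ∀ ε > 0, ∃ δ > 0, ∀ x : M, infDist x K < δ → infDist x L < δ →
      infDist x (K ∩ L) < ε := by
  intro ε hε
  by_contra h
  push_neg at h
  choose x hx1 hx2 hx3 using fun n : ℕ => h (1 / (n + 1)) (by positivity)
  have hKne : K.Nonempty := ⟨hKL.choose, hKL.choose_spec.1⟩
  -- pick k n ∈ K realizing infDist
  have hk : ∀ n, ∃ k ∈ K, infDist (x n) K = dist (x n) k :=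
    fun n => hK.exists_infDist_eq_dist hKne (x n)
  choose k hkK hkd using hk
  obtain ⟨z, hzK, φ, hφ, hconv⟩ := hK.tendsto_subseq hkK
  have hdist : Tendsto (fun n => dist (x (φ n)) z) atTop (nhds 0) := by
    have h1 : Tendsto (fun n => dist (x (φ n)) (k (φ n))) atTop (nhds 0) := by
      have : Tendsto (fun n : ℕ => 1 / ((φ n : ℝ) + 1)) atTop (nhds 0) := by
        exact tendsto_one_div_add_atTop_nhds_zero_nat.comp hφ.tendsto_atTop
      apply squeeze_zero (fun n => dist_nonneg) _ this
      intro n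
      rw [← hkd]
      exact (hx1 (φ n)).le
    have h2 : Tendsto (fun n => dist (k (φ n)) z) atTop (nhds 0) :=
      tendsto_iff_dist_tendsto_zero.mp hconv
    have := h1.add h2
    rw [add_zero] at this
    exact squeeze_zero (fun n => dist_nonneg) (fun n => dist_triangle _ _ _) this
  have hzL : z ∈ L := by
    rw [← hLcl.closure_eq, mem_closure_iff_infDist_zero ⟨hKL.choose, hKL.choose_spec.2⟩]
    have hle : ∀ n, infDist z L ≤ dist (x (φ n)) z + 1 / (φ n + 1) := by
      intro n
      calc infDist z L ≤ infDist (x (φ n)) L + dist z (x (φ n)) := infDist_le_infDist_add_dist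
        _ ≤ dist (x (φ n)) z + 1 / (φ n + 1) := by
            rw [dist_comm z, add_comm]; exact add_le_add le_rfl (hx2 (φ n)).le
    have hlim : Tendsto (fun n => dist (x (φ n)) z + 1 / (φ n + 1 : ℝ)) atTop (nhds 0) := by
      have h2 : Tendsto (fun n : ℕ => 1 / ((φ n : ℝ) + 1)) atTop (nhds 0) :=
        tendsto_one_div_add_atTop_nhds_zero_nat.comp hφ.tendsto_atTop
      simpa using hdist.add h2
    have := le_of_tendsto_of_tendsto' tendsto_const_nhds hlim hle
    exact le_antisymm this infDist_nonneg
  have hzKL : z ∈ K ∩ L := ⟨hzK, hzL⟩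
  have hle : ∀ n, ε ≤ dist (x (φ n)) z := by
    intro n
    calc ε ≤ infDist (x (φ n)) (K ∩ L) := hx3 (φ n)
      _ ≤ dist (x (φ n)) z := infDist_le_dist_of_mem hzKL
  have := le_of_tendsto_of_tendsto' tendsto_const_nhds hdist hle
  linarith

/-- If `Kₙ → K` and `Lₙ → L` in the Hausdorff metric with `K ⊆ Kₙ`, `L ⊆ Lₙ` and
`K ∩ L ≠ ∅`, then `Kₙ ∩ Lₙ → K ∩ L` in the Hausdorff metric. -/
theorem inter_tendsto_hausdorff (M : Type*) [MetricSpace M]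
    (K L : Set M) (hK : IsCompact K) (hL : IsCompact L)
    (hKL : (K ∩ L).Nonempty)
    (Kseq Lseq : ℕ → Set M)
    (hKc : ∀ n, IsCompact (Kseq n)) (hLc : ∀ n, IsCompact (Lseq n))
    (hKs : ∀ n, K ⊆ Kseq n) (hLs : ∀ n, L ⊆ Lseq n)
    (hKt : Filter.Tendsto (fun n => Metric.hausdorffDist (Kseq n) K) Filter.atTop (nhds 0))
    (hLt : Filter.Tendsto (fun n => Metric.hausdorffDist (Lseq n) L) Filter.atTop (nhds 0)) :
    Filter.Tendsto (fun n => Metric.hausdorffDist (Kseq n ∩ Lseq n) (K ∩ L))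
      Filter.atTop (nhds 0) := by
  have hKne : K.Nonempty := ⟨hKL.choose, hKL.choose_spec.1⟩
  have hLne : L.Nonempty := ⟨hKL.choose, hKL.choose_spec.2⟩
  rw [Metric.tendsto_nhds]
  intro ε hε
  obtain ⟨δ, hδ, hkey⟩ := inter_key hK hL.isClosed hKL (ε / 2) (by linarith)
  have hKev : ∀ᶠ n in atTop, hausdorffDist (Kseq n) K < δ := by
    have := Metric.tendsto_nhds.mp hKt δ hδ
    filter_upwards [this] with n hn
    rwa [Real.dist_0_eq_abs, abs_of_nonneg hausdorffDist_nonneg] at hn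
  have hLev : ∀ᶠ n in atTop, hausdorffDist (Lseq n) L < δ := by
    have := Metric.tendsto_nhds.mp hLt δ hδ
    filter_upwards [this] with n hn
    rwa [Real.dist_0_eq_abs, abs_of_nonneg hausdorffDist_nonneg] at hn
  filter_upwards [hKev, hLev] with n hn1 hn2
  rw [Real.dist_0_eq_abs, abs_of_nonneg hausdorffDist_nonneg]
  have hKe : hausdorffEdist (Kseq n) K ≠ ⊤ :=
    hausdorffEdist_ne_top_of_nonempty_of_bounded (hKne.mono (hKs n)) hKne
      (hKc n).isBounded hK.isBounded
  have hLe : hausdorffEdist (Lseq n) L ≠ ⊤ :=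
    hausdorffEdist_ne_top_of_nonempty_of_bounded (hLne.mono (hLs n)) hLne
      (hLc n).isBounded hL.isBounded
  have hbound : hausdorffDist (Kseq n ∩ Lseq n) (K ∩ L) ≤ ε / 2 := by
    apply hausdorffDist_le_of_infDist (by linarith)
    · intro x hx
      have h1 : infDist x K < δ :=
        lt_of_le_of_lt (infDist_le_hausdorffDist_of_mem hx.1 hKe) hn1
      have h2 : infDist x L < δ :=
        lt_of_le_of_lt (infDist_le_hausdorffDist_of_mem hx.2 hLe) hn2
      exact (hkey x h1 h2).le
    · intro x hx
      have : x ∈ Kseq n ∩ Lseq n := ⟨hKs n hx.1, hLs n hx.2⟩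
      rw [infDist_zero_of_mem this]
      linarith
  linarith
end

section
/- Let X be a separable metric space with completion X*. If X is strictly ℕ^ℕ-dominated (there is a family {A_K : K ∈ K(ℕ^ℕ)} of compact subsets of X covering X with A_{K∩L} = A_K ∩ A_L for all compact K, L ⊆ ℕ^ℕ), then X is a Borel subset of X*. -/
/-!
Put `C f := A (Iic f)`, viewed in `X*`: these sets are compact, hence closed, strict domination
says that `C (f ⊓ g) = C f ∩ C g`, and they cover `X`. Encode each `z ∈ ⋃ f, C f` by the least index `μ z`
such that for every `N` some `g ≤ μ z` on `{0, …, N - 1}` has `z ∈ C g`; it exists because `C`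
preserves infima and the set of admissible indices is closed. The graph of all admissible indices
is closed in `ℕ^ℕ × X*` (closedness of the `C g` lets one diagonalize along approximating
sequences), so the graph of `μ` is Borel, and `X` is its injective continuous projection, Borel by
Lusin–Souslin.
-/

open Set Filter Topology

theorem Pi.exists_isLeast_of_isClosed_of_infClosed {ι : Type*} {F : Set (ι → ℕ)}
    (hF : IsClosed F) (hinf : InfClosed F) (hne : F.Nonempty) : ∃ m, IsLeast F m := by
  classical
  set m : ι → ℕ := fun i => sInf ((· i) '' F)
  have hm_le : ∀ f ∈ F, m ≤ f := fun f hf i => Nat.sInf_le ⟨f, hf, rfl⟩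
  have hagree : ∀ s : Finset ι, ∃ f ∈ F, ∀ i ∈ s, f i = m i := by
    intro s
    induction s using Finset.induction_on with
    | empty =>
      obtain ⟨f, hf⟩ := hne
      exact ⟨f, hf, by simp⟩
    | insert i s _ ih =>
      obtain ⟨f, hf, hfs⟩ := ih
      obtain ⟨g, hg, hgi⟩ := Nat.sInf_mem (hne.image (· i))
      refine ⟨f ⊓ g, hinf hf hg, fun j hj =>
        le_antisymm ?_ (le_inf (hm_le f hf j) (hm_le g hg j))⟩
      rcases Finset.mem_insert.1 hj with rfl | hj
      · exact inf_le_right.trans hgi.le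
      · exact inf_le_left.trans (hfs j hj).le
  choose f hfF hfm using hagree
  have hf_tendsto : Tendsto f atTop (𝓝 m) := tendsto_pi_nhds.2 fun i =>
    tendsto_const_nhds.congr' <| (eventually_ge_atTop {i}).mono fun s hs =>
      (hfm s i (hs (Finset.mem_singleton_self i))).symm
  exact ⟨m, hF.mem_of_tendsto hf_tendsto (Eventually.of_forall hfF), hm_le⟩

theorem IsLeast.eq_iff_forall_update_notMem {ι α : Type*} [DecidableEq ι] [LinearOrder α]
    {F : Set (ι → α)} {m f : ι → α} (hm : IsLeast F m) (hF : IsUpperSet F) (hf : f ∈ F) :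
    f = m ↔ ∀ i a, a < f i → Function.update f i a ∉ F := by
  refine ⟨?_, fun h => ?_⟩
  · rintro rfl i a ha hmem
    exact (hm.2 hmem i).not_gt (by simpa using ha)
  · by_contra hne
    obtain ⟨i, hi⟩ : ∃ i, m i < f i := by
      by_contra! H
      exact hne (le_antisymm H (hm.2 hf))
    refine h i (m i) hi (hF (fun j => ?_) hm.1)
    rcases eq_or_ne j i with rfl | hj
    · simp
    · simpa [hj] using hm.2 hf j

theorem IsLocallyConstant.isClosed_setOf_mem_closure {X Y : Type*} [TopologicalSpace X]
    [TopologicalSpace Y] {φ : X → Set Y} (hφ : IsLocallyConstant φ) :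
    IsClosed {p : X × Y | p.2 ∈ closure (φ p.1)} := by
  refine isOpen_compl_iff.1 (isOpen_iff_forall_mem_open.2 fun p hp => ?_)
  refine ⟨{x | φ x = φ p.1} ×ˢ (closure (φ p.1))ᶜ, ?_,
    (hφ.isOpen_fiber _).prod isClosed_closure.isOpen_compl, rfl, hp⟩
  rintro q ⟨hq₁, hq₂⟩ hq
  exact hq₂ (hq₁ ▸ hq)

theorem isCompact_Iic_of_orderBot {α : Type*} [Preorder α] [OrderBot α] [TopologicalSpace α]
    [CompactIccSpace α] (a : α) : IsCompact (Iic a) :=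
  Icc_bot (a := a) ▸ isCompact_Icc

theorem IsCompact.bddAbove_pi {ι : Type*} {α : ι → Type*} [∀ i, TopologicalSpace (α i)]
    [∀ i, LinearOrder (α i)] [∀ i, ClosedIciTopology (α i)] [∀ i, Nonempty (α i)]
    {K : Set (∀ i, α i)} (hK : IsCompact K) : BddAbove K :=
  _root_.bddAbove_pi.2 fun i => (hK.image (continuous_apply i)).bddAbove

section IndexedClosedSets

variable {Z : Type*} (C : (ℕ → ℕ) → Set Z)

def prefixBoundedUnion (N : ℕ) (f : ℕ → ℕ) : Set Z :=
  ⋃ (g : ℕ → ℕ) (_ : ∀ n : Fin N, g n ≤ f n), C g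

def boundingIndices (z : Z) : Set (ℕ → ℕ) :=
  {f | ∀ N, z ∈ prefixBoundedUnion C N f}

-- Minimality is tested by lowering one coordinate at a time, which keeps the set Borel.
def leastBoundingGraph : Set ((ℕ → ℕ) × Z) :=
  {p | p.1 ∈ boundingIndices C p.2 ∧
    ∀ n k, k < p.1 n → Function.update p.1 n k ∉ boundingIndices C p.2}

theorem isUpperSet_boundingIndices (z : Z) : IsUpperSet (boundingIndices C z) :=
  fun f f' hff' hf N => by
    obtain ⟨g, hg, hz⟩ := mem_iUnion₂.1 (hf N)
    exact mem_iUnion₂.2 ⟨g, fun n => (hg n).trans (hff' n), hz⟩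

theorem infClosed_boundingIndices (hinf : ∀ f g, C f ∩ C g ⊆ C (f ⊓ g)) (z : Z) :
    InfClosed (boundingIndices C z) :=
  fun f hf f' hf' N => by
    obtain ⟨g, hg, hz⟩ := mem_iUnion₂.1 (hf N)
    obtain ⟨g', hg', hz'⟩ := mem_iUnion₂.1 (hf' N)
    exact mem_iUnion₂.2 ⟨g ⊓ g', fun n => inf_le_inf (hg n) (hg' n), hinf g g' ⟨hz, hz'⟩⟩

theorem boundingIndices_nonempty_iff {z : Z} :
    (boundingIndices C z).Nonempty ↔ z ∈ ⋃ f, C f := by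
  refine ⟨fun ⟨f, hf⟩ => ?_, fun hz => ?_⟩
  · obtain ⟨g, -, hz⟩ := mem_iUnion₂.1 (hf 0)
    exact mem_iUnion.2 ⟨g, hz⟩
  · obtain ⟨f, hz⟩ := mem_iUnion.1 hz
    exact ⟨f, fun N => mem_iUnion₂.2 ⟨f, fun n => le_rfl, hz⟩⟩

theorem mk_mem_leastBoundingGraph_iff {z : Z} {f m : ℕ → ℕ}
    (hm : IsLeast (boundingIndices C z) m) : (f, z) ∈ leastBoundingGraph C ↔ f = m := by
  refine ⟨fun h => (hm.eq_iff_forall_update_notMem (isUpperSet_boundingIndices C z) h.1).2 h.2,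
    ?_⟩
  rintro rfl
  exact ⟨hm.1, (hm.eq_iff_forall_update_notMem (isUpperSet_boundingIndices C z) hm.1).1 rfl⟩

theorem isLocallyConstant_prefixBoundedUnion (N : ℕ) :
    IsLocallyConstant (prefixBoundedUnion C N) :=
  (IsLocallyConstant.of_discrete fun s : Fin N → ℕ =>
    ⋃ (g : ℕ → ℕ) (_ : ∀ n : Fin N, g n ≤ s n), C g).comp_continuous
    (continuous_pi fun n : Fin N => continuous_apply (n : ℕ))

variable [TopologicalSpace Z]

theorem mem_prefixBoundedUnion_of_tendsto (hclosed : ∀ f, IsClosed (C f)) (hmono : Monotone C)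
    {x : ℕ → Z} {z : Z} {f : ℕ → ℕ} (hx : Tendsto x atTop (𝓝 z))
    (hxf : ∀ N, x N ∈ prefixBoundedUnion C N f) (N₀ : ℕ) : z ∈ prefixBoundedUnion C N₀ f := by
  choose g hgf hxg using fun N => mem_iUnion₂.1 (hxf N)
  -- `H` dominates every `g N` with `N ≥ N₀` and agrees with `f` below `N₀`.
  let H : ℕ → ℕ := fun j => max (f j) ((Finset.Icc N₀ j).sup fun N => g N j)
  have hgH : ∀ N, N₀ ≤ N → g N ≤ H := by
    intro N hN j
    by_cases hj : j < N
    · exact (hgf N ⟨j, hj⟩).trans (le_max_left _ _)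
    · exact (Finset.le_sup (f := fun N => g N j)
        (Finset.mem_Icc.2 ⟨hN, not_lt.1 hj⟩)).trans (le_max_right _ _)
  have hzH : z ∈ C H := (hclosed H).mem_of_tendsto hx <|
    (eventually_ge_atTop N₀).mono fun N hN => hmono (hgH N hN) (hxg N)
  refine mem_iUnion₂.2 ⟨H, fun n => ?_, hzH⟩
  simp [H]

theorem mem_prefixBoundedUnion_of_forall_mem_closure [FirstCountableTopology Z]
    (hclosed : ∀ f, IsClosed (C f)) (hmono : Monotone C) {z : Z} {f : ℕ → ℕ}
    (h : ∀ N, z ∈ closure (prefixBoundedUnion C N f)) (N : ℕ) :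
    z ∈ prefixBoundedUnion C N f := by
  obtain ⟨u, hu⟩ := (𝓝 z).exists_antitone_basis
  choose x hx using fun N => mem_closure_iff_nhds.1 (h N) (u N) (hu.mem N)
  exact mem_prefixBoundedUnion_of_tendsto C hclosed hmono
    (hu.tendsto fun N => (hx N).1) (fun N => (hx N).2) N

theorem isClosed_setOf_mem_boundingIndices [FirstCountableTopology Z]
    (hclosed : ∀ f, IsClosed (C f)) (hmono : Monotone C) :
    IsClosed {p : (ℕ → ℕ) × Z | p.1 ∈ boundingIndices C p.2} := by
  have : {p : (ℕ → ℕ) × Z | p.1 ∈ boundingIndices C p.2} =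
      ⋂ N, {p | p.2 ∈ closure (prefixBoundedUnion C N p.1)} := by
    ext p
    simp only [boundingIndices, mem_ofPred_eq, mem_iInter]
    exact ⟨fun h N => subset_closure (h N),
      mem_prefixBoundedUnion_of_forall_mem_closure C hclosed hmono⟩
  rw [this]
  exact isClosed_iInter fun N =>
    (isLocallyConstant_prefixBoundedUnion C N).isClosed_setOf_mem_closure

theorem exists_isLeast_boundingIndices [FirstCountableTopology Z] (hclosed : ∀ f, IsClosed (C f))
    (hC : ∀ f g, C (f ⊓ g) = C f ∩ C g) {z : Z} (hz : z ∈ ⋃ f, C f) :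
    ∃ m, IsLeast (boundingIndices C z) m :=
  Pi.exists_isLeast_of_isClosed_of_infClosed
    ((isClosed_setOf_mem_boundingIndices C hclosed (Monotone.of_map_inf hC)).preimage
      (Continuous.prodMk_left z))
    (infClosed_boundingIndices C (fun f g => (hC f g).ge) z)
    ((boundingIndices_nonempty_iff C).2 hz)

theorem image_snd_leastBoundingGraph [FirstCountableTopology Z] (hclosed : ∀ f, IsClosed (C f))
    (hC : ∀ f g, C (f ⊓ g) = C f ∩ C g) :
    Prod.snd '' leastBoundingGraph C = ⋃ f, C f := by
  refine Subset.antisymm ?_ fun z hz => ?_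
  · rintro _ ⟨p, hp, rfl⟩
    exact (boundingIndices_nonempty_iff C).1 ⟨p.1, hp.1⟩
  · obtain ⟨m, hm⟩ := exists_isLeast_boundingIndices C hclosed hC hz
    exact ⟨(m, z), (mk_mem_leastBoundingGraph_iff C hm).2 rfl, rfl⟩

theorem injOn_snd_leastBoundingGraph [FirstCountableTopology Z] (hclosed : ∀ f, IsClosed (C f))
    (hC : ∀ f g, C (f ⊓ g) = C f ∩ C g) :
    InjOn Prod.snd (leastBoundingGraph C) := by
  rintro ⟨f, z⟩ hp ⟨f', z'⟩ hq (rfl : z = z')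
  obtain ⟨m, hm⟩ := exists_isLeast_boundingIndices C hclosed hC
    ((boundingIndices_nonempty_iff C).1 ⟨f, hp.1⟩)
  rw [(mk_mem_leastBoundingGraph_iff C hm).1 hp, (mk_mem_leastBoundingGraph_iff C hm).1 hq]

theorem measurableSet_leastBoundingGraph [SecondCountableTopology Z] [MeasurableSpace Z]
    [OpensMeasurableSpace Z] (hclosed : ∀ f, IsClosed (C f)) (hmono : Monotone C) :
    MeasurableSet (leastBoundingGraph C) := by
  have hG := isClosed_setOf_mem_boundingIndices C hclosed hmono
  simp only [leastBoundingGraph, ofPred_and, ofPred_forall]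
  refine hG.measurableSet.inter <| .iInter fun n => .iInter fun k => .imp ?_ ?_
  · exact (isOpen_lt continuous_const ((continuous_apply n).comp continuous_fst)).measurableSet
  · exact (hG.isOpen_compl.preimage
      ((continuous_fst.update n continuous_const).prodMk continuous_snd)).measurableSet

theorem measurableSet_iUnion_of_map_inf [PolishSpace Z] [MeasurableSpace Z] [BorelSpace Z]
    (hclosed : ∀ f, IsClosed (C f)) (hC : ∀ f g, C (f ⊓ g) = C f ∩ C g) :
    MeasurableSet (⋃ f, C f) := by
  rw [← image_snd_leastBoundingGraph C hclosed hC]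
  exact (measurableSet_leastBoundingGraph C hclosed (Monotone.of_map_inf hC)
    ).image_of_continuousOn_injOn continuous_snd.continuousOn
    (injOn_snd_leastBoundingGraph C hclosed hC)

end IndexedClosedSets

theorem iUnion_Iic_eq_univ {ι X : Type*} (A : Set (ι → ℕ) → Set X)
    (hcover : (⋃ K ∈ {K : Set (ι → ℕ) | IsCompact K}, A K) = univ)
    (hinter : ∀ K L : Set (ι → ℕ), IsCompact K → IsCompact L → A (K ∩ L) = A K ∩ A L) :
    ⋃ f, A (Iic f) = univ := by
  refine eq_univ_of_forall fun x => ?_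
  have hx : x ∈ ⋃ K ∈ {K : Set (ι → ℕ) | IsCompact K}, A K := hcover ▸ mem_univ x
  obtain ⟨K, hK, hxK⟩ := mem_iUnion₂.1 hx
  obtain ⟨b, hb⟩ := hK.bddAbove_pi
  have hKb : K ⊆ Iic b := fun g hg => hb hg
  have : A K ⊆ A (Iic b) := by
    rw [← inter_eq_left.2 hKb, hinter K _ hK (isCompact_Iic_of_orderBot b)]
    exact inter_subset_right
  exact mem_iUnion.2 ⟨b, this hxK⟩

/-- A strictly `ℕ^ℕ`-dominated separable metric space is Borel in its completion. -/
theorem strictly_dominated_borel (X : Type*) [MetricSpace X]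
    [TopologicalSpace.SeparableSpace X]
    (A : Set (ℕ → ℕ) → Set X)
    (hcomp : ∀ K : Set (ℕ → ℕ), IsCompact K → IsCompact (A K))
    (hcover : (⋃ K ∈ {K : Set (ℕ → ℕ) | IsCompact K}, A K) = Set.univ)
    (hinter : ∀ K L : Set (ℕ → ℕ), IsCompact K → IsCompact L → A (K ∩ L) = A K ∩ A L) :
    @MeasurableSet (UniformSpace.Completion X) (borel (UniformSpace.Completion X))
      (Set.range ((↑) : X → UniformSpace.Completion X)) := by
  let := borel (UniformSpace.Completion X)
  have : BorelSpace (UniformSpace.Completion X) := ⟨rfl⟩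
  have : TopologicalSpace.SeparableSpace (UniformSpace.Completion X) :=
    UniformSpace.Completion.denseRange_coe.separableSpace
      (UniformSpace.Completion.continuous_coe X)
  rw [← image_univ, ← iUnion_Iic_eq_univ A hcover hinter, image_iUnion]
  refine measurableSet_iUnion_of_map_inf _
    (fun f => ((hcomp _ (isCompact_Iic_of_orderBot f)).image
      (UniformSpace.Completion.continuous_coe X)).isClosed)
    fun f g => ?_
  rw [← Iic_inter_Iic, hinter _ _ (isCompact_Iic_of_orderBot f) (isCompact_Iic_of_orderBot g),
    image_inter (UniformSpace.Completion.coe_injective X)]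
end

section
/- Let {A_K : K ∈ K(ℕ^ℕ)} be a family of compact subsets of a space X satisfying A_{K∩L} = A_K ∩ A_L for all compact K, L, and the countable intersection property ⋂_n A_{K_n} = A_{⋂_n K_n} for every sequence of compact sets K_n. For p ∈ X with p ∈ A_L for some L, let G_p = {L ∈ K(ℕ^ℕ) : p ∈ A_L} and K = ⋂_{L ∈ G_p} L. Then p ∈ A_K, and K is the smallest compact set with p ∈ A_K (i.e., p ∉ A_{K'} for every compact proper subset K' of K). -/
/-- For a family `{A_K}` with `A_{K∩L} = A_K ∩ A_L` and the countable intersection property,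
the set `K = ⋂ {L compact : p ∈ A_L}` is the smallest compact set with `p ∈ A_K`. -/
theorem smallest_compact_support (X : Type*) [TopologicalSpace X]
    (A : Set (ℕ → ℕ) → Set X)
    (hcomp : ∀ K : Set (ℕ → ℕ), IsCompact K → IsCompact (A K))
    (hinter : ∀ K L : Set (ℕ → ℕ), IsCompact K → IsCompact L → A (K ∩ L) = A K ∩ A L)
    (hctble : ∀ Kseq : ℕ → Set (ℕ → ℕ), (∀ n, IsCompact (Kseq n)) →
      (⋂ n, A (Kseq n)) = A (⋂ n, Kseq n))
    (p : X) (L₀ : Set (ℕ → ℕ)) (hL₀ : IsCompact L₀) (hp : p ∈ A L₀) :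
    p ∈ A (⋂ L ∈ {L : Set (ℕ → ℕ) | IsCompact L ∧ p ∈ A L}, L) ∧
    ∀ K' : Set (ℕ → ℕ), IsCompact K' →
      K' ⊆ (⋂ L ∈ {L : Set (ℕ → ℕ) | IsCompact L ∧ p ∈ A L}, L) →
      K' ≠ (⋂ L ∈ {L : Set (ℕ → ℕ) | IsCompact L ∧ p ∈ A L}, L) →
      p ∉ A K' := by
  set G : Set (Set (ℕ → ℕ)) := {L : Set (ℕ → ℕ) | IsCompact L ∧ p ∈ A L} with hG
  set K : Set (ℕ → ℕ) := ⋂ L ∈ G, L with hK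
  have hmem : p ∈ A K := by
    -- use second countability: complements of the compact sets are open
    obtain ⟨T, hTc, hTU⟩ := TopologicalSpace.isOpen_iUnion_countable
      (fun i : G => (i.1)ᶜ) (fun i => i.2.1.isClosed.isOpen_compl)
    -- the countable subfamily has the same intersection
    have hTI : (⋂ i ∈ T, (i : G).1) = K := by
      have h2 : (⋂ i ∈ T, ((i : G) : Set (ℕ → ℕ))) = ⋂ i : G, (i : Set (ℕ → ℕ)) := by
        have := congrArg compl hTU
        simpa only [Set.compl_iUnion, compl_compl] using this
      rw [h2, hK]
      ext x
      simp only [Set.mem_iInter]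
      constructor
      · intro h L hL; exact h ⟨L, hL⟩
      · intro h i; exact h i.1 i.2
    -- add L₀ to the family and enumerate
    have hL₀G : (⟨L₀, hL₀, hp⟩ : G) ∈ T ∪ {⟨L₀, hL₀, hp⟩} := Set.mem_union_right _ rfl
    have hT'c : (T ∪ {(⟨L₀, hL₀, hp⟩ : G)}).Countable :=
      hTc.union (Set.countable_singleton _)
    obtain ⟨f, hf⟩ := Set.Countable.exists_eq_range hT'c ⟨_, hL₀G⟩
    have hfmem : ∀ n, f n ∈ T ∪ {(⟨L₀, hL₀, hp⟩ : G)} := by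
      intro n; rw [hf]; exact ⟨n, rfl⟩
    have hKseq : (⋂ n, ((f n : G) : Set (ℕ → ℕ))) = K := by
      apply Set.Subset.antisymm
      · rw [← hTI]
        intro x hx
        refine Set.mem_iInter₂.2 fun i hi => ?_
        have : i ∈ Set.range f := by rw [← hf]; exact Set.mem_union_left _ hi
        obtain ⟨n, rfl⟩ := this
        exact Set.mem_iInter.1 hx n
      · intro x hx
        refine Set.mem_iInter.2 fun n => ?_
        exact Set.mem_iInter₂.1 hx (f n).1 (f n).2
    have := hctble (fun n => ((f n : G) : Set (ℕ → ℕ))) (fun n => (f n).2.1)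
    rw [hKseq] at this
    rw [← this]
    exact Set.mem_iInter.2 fun n => (f n).2.2
  refine ⟨hmem, fun K' hK' hsub hne hpK' => ?_⟩
  have hK'G : K' ∈ G := ⟨hK', hpK'⟩
  have : K ⊆ K' := Set.biInter_subset_of_mem hK'G
  exact hne (Set.Subset.antisymm hsub this)
end
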